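/- For a birth-death chain on ℕ absorbed at 0 with up-probability p₁ = 2λ/(1+3λ) from state 1 and p = λ/(1+λ) from states k ≥ 2 (λ > 1), and A a contiguous block of |A| ≥ 1 sites, the absorption probability starting from state |A| equals ((λ+1)/(3λ−1))·(1/λ)^{|A|−1}. -/

import Mathlib

/-! For `k ≥ 2` the harmonic equation with constant `p = λ/(1+λ)` says that `λ h(k+1) - h k`
does not depend on `k`, so `h (n+1) = a + λ⁻ⁿ (h 1 - a)` with `a = lim h`. The explicit sequence
`absorptionProb` is a nonnegative solution tending to `0`, so minimality squeezes `h` between `0`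
and it and forces `a = 0`; the equation at state `1` then gives `h 1 = (λ+1)/(3λ-1)`. -/

open Filter Topology

theorem exists_eq_add_pow_mul_of_harmonic {p : ℝ} (hp0 : p ≠ 0) (hp : 2 * p ≠ 1) {u : ℕ → ℝ}
    (hu : ∀ k, 2 ≤ k → u k = p * u (k + 1) + (1 - p) * u (k - 1)) :
    ∃ a, ∀ n, u (n + 1) = a + ((1 - p) / p) ^ n * (u 1 - a) := by
  obtain ⟨c, hc⟩ : ∃ c, ∀ n, p * u (n + 2) - (1 - p) * u (n + 1) = c := by
    refine ⟨p * u 2 - (1 - p) * u 1, fun n => ?_⟩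
    induction n with
    | zero => rfl
    | succ n ih =>
      have := hu (n + 2) (by omega)
      rw [show n + 2 - 1 = n + 1 by omega] at this
      linear_combination ih - this
  -- `a` is the fixed point of the affine recursion `p u(k+1) = (1-p) u k + c`
  obtain ⟨a, ha⟩ : ∃ a, (2 * p - 1) * a = c :=
    ⟨c / (2 * p - 1), mul_div_cancel₀ _ (sub_ne_zero.mpr hp)⟩
  have step : ∀ n, u (n + 2) - a = (1 - p) / p * (u (n + 1) - a) := by
    intro n
    field_simp
    linear_combination hc n - ha
  refine ⟨a, fun n => ?_⟩
  induction n with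
  | zero => ring
  | succ n ih => linear_combination step n + (1 - p) / p * ih

theorem tendsto_add_pow_mul {r : ℝ} (hr0 : 0 ≤ r) (hr1 : r < 1) (a b : ℝ) :
    Tendsto (fun n => a + r ^ n * b) atTop (𝓝 a) := by
  simpa using tendsto_const_nhds.add ((tendsto_pow_atTop_nhds_zero_of_lt_one hr0 hr1).mul_const b)

noncomputable def absorptionProb (lam : ℝ) : ℕ → ℝ
  | 0 => 1
  | n + 1 => (lam + 1) / (3 * lam - 1) * (1 / lam) ^ n

section
variable {lam : ℝ}

theorem absorptionProb_nonneg (hlam : 1 < lam) (k : ℕ) : 0 ≤ absorptionProb lam k := by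
  have : 0 < 3 * lam - 1 := by linarith
  cases k <;> simp only [absorptionProb] <;> positivity

theorem tendsto_absorptionProb (hlam : 1 < lam) : Tendsto (absorptionProb lam) atTop (𝓝 0) := by
  rw [← tendsto_add_atTop_iff_nat 1]
  have hx : 1 / lam < 1 := (div_lt_one (by linarith)).mpr hlam
  have := (tendsto_pow_atTop_nhds_zero_of_lt_one (by positivity) hx).const_mul
    ((lam + 1) / (3 * lam - 1))
  rwa [mul_zero] at this

theorem absorptionProb_harmonic (hlam : 1 < lam) {p : ℕ → ℝ}
    (hp1 : p 1 = 2 * lam / (1 + 3 * lam)) (hpk : ∀ k, 2 ≤ k → p k = lam / (1 + lam)) (k : ℕ)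
    (hk : 1 ≤ k) :
    absorptionProb lam k =
      p k * absorptionProb lam (k + 1) + (1 - p k) * absorptionProb lam (k - 1) := by
  have : 1 + 3 * lam ≠ 0 := by linarith
  have : 1 + lam ≠ 0 := by linarith
  have : lam ≠ 0 := by linarith
  have hC : (lam + 1) / (3 * lam - 1) * (3 * lam - 1) = lam + 1 :=
    div_mul_cancel₀ _ (by linarith)
  obtain rfl | ⟨n, rfl⟩ : k = 1 ∨ ∃ n, k = n + 2 := by
    rcases k with _ | _ | n <;> simp_all
  · simp only [absorptionProb, hp1, Nat.sub_self]
    generalize (lam + 1) / (3 * lam - 1) = C at hC ⊢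
    field_simp
    linear_combination hC
  · rw [show n + 2 - 1 = n + 1 by omega]
    simp only [absorptionProb, hpk _ le_add_self, pow_succ]
    generalize (lam + 1) / (3 * lam - 1) = C
    field_simp
    ring
end

/-- For the birth-death chain on ℕ absorbed at 0 with up-probability `2λ/(1+3λ)` from
state 1 and `λ/(1+λ)` from every state `k ≥ 2` (λ > 1), the absorption probability
(minimal nonnegative solution of the harmonic equations with boundary value 1 at 0)
starting from a state `n = |A| ≥ 1` equals `((λ+1)/(3λ−1))·(1/λ)^{n−1}`. -/
theorem stmt_17 (lam : ℝ) (hlam : 1 < lam)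
    (p : ℕ → ℝ) (hp1 : p 1 = 2 * lam / (1 + 3 * lam))
    (hpk : ∀ k, 2 ≤ k → p k = lam / (1 + lam))
    (h : ℕ → ℝ)
    (h0 : h 0 = 1)
    (hrec : ∀ k, 1 ≤ k → h k = p k * h (k + 1) + (1 - p k) * h (k - 1))
    (hnonneg : ∀ k, 0 ≤ h k)
    (hmin : ∀ g : ℕ → ℝ, g 0 = 1 →
      (∀ k, 1 ≤ k → g k = p k * g (k + 1) + (1 - p k) * g (k - 1)) →
      (∀ k, 0 ≤ g k) → ∀ k, h k ≤ g k) :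
    ∀ n, 1 ≤ n → h n = ((lam + 1) / (3 * lam - 1)) * (1 / lam) ^ (n - 1) := by
  have hl : 0 < lam := by linarith
  have hp : 2 * (lam / (1 + lam)) ≠ 1 := by
    rw [← mul_div_assoc, Ne, div_eq_one_iff_eq (by positivity)]
    linarith
  obtain ⟨a, ha⟩ := exists_eq_add_pow_mul_of_harmonic (by positivity) hp (u := h) fun k hk => by
    rw [← hpk k hk]
    exact hrec k (by omega)
  have hr : (1 - lam / (1 + lam)) / (lam / (1 + lam)) = 1 / lam := by field_simp; ring
  rw [hr] at ha
  have h_to_a : Tendsto h atTop (𝓝 a) := (tendsto_add_atTop_iff_nat 1).mp <|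
    (tendsto_add_pow_mul (by positivity) ((div_lt_one hl).mpr hlam) a (h 1 - a)).congr
      fun n => (ha n).symm
  have h_to_0 : Tendsto h atTop (𝓝 0) :=
    tendsto_of_tendsto_of_tendsto_of_le_of_le tendsto_const_nhds (tendsto_absorptionProb hlam)
      hnonneg (hmin _ rfl (absorptionProb_harmonic hlam hp1 hpk) (absorptionProb_nonneg hlam))
  obtain rfl : a = 0 := tendsto_nhds_unique h_to_a h_to_0
  have h1 : h 1 = (lam + 1) / (3 * lam - 1) := by
    have e := hrec 1 le_rfl
    rw [hp1, Nat.sub_self, h0, ha 1] at e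
    field_simp at e
    rw [eq_div_iff (by linarith)]
    linear_combination e
  intro n hn
  obtain ⟨m, rfl⟩ := Nat.exists_eq_add_of_le' hn
  rw [ha m, h1, Nat.add_sub_cancel]
  ring
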